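/- arXiv:2602.00764 — 4 statements merged into one kernel-verified Lean document; each statement's English description precedes it below -/
import Mathlib

section
/- Let a = a₁a₂⋯a_m and b = b₁b₂⋯b_n be words in the letters {x,y}, and fix k with 1 ≤ k ≤ m. Then in H_t = Q[t]⟨x,y⟩, a ⧢_t b = Σ_{i=0}^{n} (a₁⋯a_{k−1} ⧢ b₁⋯b_i) a_k (a_{k+1}⋯a_m ⧢_t b_{i+1}⋯b_n) − (a₁⋯a_{k−1} ⧢ b₁⋯b_{n−1}ρ(b_n)) a_k a_{k+1}⋯a_m − δ_{k,m} Σ_{i=0}^{n−1} (a₁⋯a_{m−1} ⧢ b₁⋯b_i) ρ(a_m) b_{i+1}⋯b_n, where ⧢ denotes the ordinary shuffle product (the t = 0 case of ⧢_t). -/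
open scoped BigOperators

noncomputable section

abbrev Rt : Type := Polynomial ℚ
abbrev Ht : Type := MonoidAlgebra Rt (FreeMonoid (Fin 2))

/-- The word `l` as an element of `H_t`. -/
def wd (l : List (Fin 2)) : Ht :=
  MonoidAlgebra.of Rt (FreeMonoid (Fin 2)) (FreeMonoid.ofList l)

/-- The letter `x`. -/
def wx : Ht := wd [0]
/-- The letter `y`. -/
def wy : Ht := wd [1]

/-- ρ(x) = 0, ρ(y) = t·x. -/
def ρt : Fin 2 → Ht := fun a => if a = 1 then (Polynomial.X : Rt) • wx else 0

/-- δ: indicator of the empty word. -/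
def δw : List (Fin 2) → Rt := fun w => if w = [] then 1 else 0

/-- The t-shuffle product on words. -/
def tshW : List (Fin 2) → List (Fin 2) → Ht
  | [], w => wd w
  | a :: w, [] => wd (a :: w)
  | a :: w1, b :: w2 =>
      wd [a] * tshW w1 (b :: w2) + wd [b] * tshW (a :: w1) w2
        - δw w1 • (ρt a * wd (b :: w2)) - δw w2 • (ρt b * wd (a :: w1))
  termination_by w1 w2 => w1.length + w2.length

/-- The ordinary shuffle product (t = 0 case) on words. -/
def shW : List (Fin 2) → List (Fin 2) → Ht
  | [], w => wd w
  | a :: w, [] => wd (a :: w)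
  | a :: w1, b :: w2 =>
      wd [a] * shW w1 (b :: w2) + wd [b] * shW (a :: w1) w2
  termination_by w1 w2 => w1.length + w2.length

/-- The t-shuffle product on `H_t`, extended Q[t]-bilinearly. -/
def tshH (u v : Ht) : Ht :=
  u.coeff.sum fun w1 c1 => v.coeff.sum fun w2 c2 =>
    (c1 * c2) • tshW (FreeMonoid.toList w1) (FreeMonoid.toList w2)

/-- The ordinary shuffle product on `H_t`, extended Q[t]-bilinearly. -/
def shH (u v : Ht) : Ht :=
  u.coeff.sum fun w1 c1 => v.coeff.sum fun w2 c2 =>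
    (c1 * c2) • shW (FreeMonoid.toList w1) (FreeMonoid.toList w2)

/-!
Write `a = u c v` with `|u| = k - 1` and let `R(u, b)` be the right-hand side. As functions of
`(u, b)`, both `a ⧢_t b` and `R` satisfy the defining recursion of `⧢_t` in the first letters of
`u` and `b`. For `R` this comes from expanding every `u ⧢ b₁⋯bᵢ` by the shuffle recursion: the
`i = 0` terms recombine into the contribution of the first letter of `u`, and for `n = 1` the
letter `x` of `u ⧢ ρ(b₁)` taken first supplies the correction `-δ(b₂⋯bₙ) ρ(b₁) a`. A double
induction on `u` and `b` is then left with `u = []`, an induction on `b` of the same kind, and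
`b = []`, where both sides are `a` once the `ρ(bₙ)`-term is read as `0`.
-/

section Words

variable (u v : List (Fin 2))

lemma wd_nil : wd [] = 1 := map_one _

lemma wd_append : wd (u ++ v) = wd u * wd v := map_mul _ _ _

lemma wd_cons (c : Fin 2) (l : List (Fin 2)) : wd (c :: l) = wd [c] * wd l := wd_append [c] l

lemma tshW_nil_right : tshW u [] = wd u := by cases u <;> rw [tshW]

lemma tshW_cons_cons (a b : Fin 2) :
    tshW (a :: u) (b :: v) = wd [a] * tshW u (b :: v) + wd [b] * tshW (a :: u) v
      - δw u • (ρt a * wd (b :: v)) - δw v • (ρt b * wd (a :: u)) := by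
  rw [tshW]

lemma shW_nil_left : shW [] u = wd u := by rw [shW]

lemma shW_nil_right : shW u [] = wd u := by cases u <;> rw [shW]

lemma shW_cons_cons (a b : Fin 2) :
    shW (a :: u) (b :: v) = wd [a] * shW u (b :: v) + wd [b] * shW (a :: u) v := by
  rw [shW]

lemma tshH_wd_wd : tshH (wd u) (wd v) = tshW u v := by
  simp [tshH, wd, MonoidAlgebra.of_apply, Finsupp.sum_single_index]

lemma shH_wd_wd : shH (wd u) (wd v) = shW u v := by
  simp [shH, wd, MonoidAlgebra.of_apply, Finsupp.sum_single_index]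

end Words

def shuffleSplitSum (N : ℕ) (u b : List (Fin 2)) (g : List (Fin 2) → Ht) : Ht :=
  ∑ i ∈ Finset.range N, shW u (b.take i) * g (b.drop i)

section ShuffleSplitSum

variable (N : ℕ) (g : List (Fin 2) → Ht) (b₁ : Fin 2) (b : List (Fin 2))

lemma shuffleSplitSum_succ_cons (u : List (Fin 2)) :
    shuffleSplitSum (N + 1) u (b₁ :: b) g =
      wd u * g (b₁ :: b) + ∑ i ∈ Finset.range N, shW u (b₁ :: b.take i) * g (b.drop i) := by
  rw [shuffleSplitSum, Finset.sum_range_succ', add_comm]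
  simp only [List.take_zero, List.drop_zero, shW_nil_right, List.take_succ_cons,
    List.drop_succ_cons]

lemma shuffleSplitSum_nil_cons :
    shuffleSplitSum (N + 1) [] (b₁ :: b) g = g (b₁ :: b) + wd [b₁] * shuffleSplitSum N [] b g := by
  rw [shuffleSplitSum_succ_cons, wd_nil, one_mul, shuffleSplitSum, Finset.mul_sum]
  simp only [shW_nil_left, wd_cons b₁ (List.take _ b), mul_assoc]

lemma shuffleSplitSum_cons_cons (a₁ : Fin 2) (u : List (Fin 2)) :
    shuffleSplitSum (N + 1) (a₁ :: u) (b₁ :: b) g =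
      wd [a₁] * shuffleSplitSum (N + 1) u (b₁ :: b) g + wd [b₁] * shuffleSplitSum N (a₁ :: u) b g := by
  rw [shuffleSplitSum_succ_cons, shuffleSplitSum_succ_cons, wd_cons a₁ u, shuffleSplitSum]
  simp only [shW_cons_cons, add_mul, Finset.sum_add_distrib, mul_add, Finset.mul_sum, mul_assoc]
  abel

end ShuffleSplitSum

def rhoCoeff (c : Fin 2) : Rt := if c = 1 then Polynomial.X else 0

lemma ρt_eq_smul (c : Fin 2) : ρt c = rhoCoeff c • wd [0] := by
  unfold ρt rhoCoeff wx
  split_ifs <;> simp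

/-- `u ⧢ b₁⋯bₙ₋₁ρ(bₙ)`, read as `0` when `b` is empty (then `bₙ` defaults to `x`, and `ρ(x) = 0`). -/
def shuffleRhoLast (u b : List (Fin 2)) : Ht :=
  rhoCoeff (b.getLastD 0) • shW u (b.dropLast ++ [0])

section ShuffleRhoLast

variable (b₁ : Fin 2) (b : List (Fin 2))

lemma shuffleRhoLast_nil_right (u : List (Fin 2)) : shuffleRhoLast u [] = 0 := by
  simp [shuffleRhoLast, rhoCoeff]

lemma shuffleRhoLast_nil_cons :
    shuffleRhoLast [] (b₁ :: b) = wd [b₁] * shuffleRhoLast [] b + δw b • ρt b₁ := by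
  cases b with
  | nil => simp [shuffleRhoLast, rhoCoeff, δw, ρt_eq_smul, shW_nil_left]
  | cons b₂ b =>
    simp [shuffleRhoLast, δw, shW_nil_left, List.dropLast_cons_cons, ← wd_cons]

lemma shuffleRhoLast_cons_cons (a₁ : Fin 2) (u : List (Fin 2)) :
    shuffleRhoLast (a₁ :: u) (b₁ :: b) =
      wd [a₁] * shuffleRhoLast u (b₁ :: b) + wd [b₁] * shuffleRhoLast (a₁ :: u) b
        + δw b • (ρt b₁ * wd (a₁ :: u)) := by
  cases b with
  | nil =>
    simp [shuffleRhoLast, rhoCoeff, δw, ρt_eq_smul, shW_cons_cons, shW_nil_right, smul_add]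
  | cons b₂ b =>
    simp [shuffleRhoLast, δw, shW_cons_cons, List.dropLast_cons_cons, smul_add]

end ShuffleRhoLast

/-- The right-hand side of the recursion, for `a = u ++ c :: v` (so `k = |u| + 1`). -/
def tshuffleRecRHS (u : List (Fin 2)) (c : Fin 2) (v b : List (Fin 2)) : Ht :=
  shuffleSplitSum (b.length + 1) u b (fun w => wd [c] * tshW v w)
    - shuffleRhoLast u b * wd (c :: v)
    - δw v • shuffleSplitSum b.length u b (fun w => ρt c * wd w)

section TshuffleRecRHS

variable (c : Fin 2) (v : List (Fin 2)) (b₁ : Fin 2) (b : List (Fin 2))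

lemma tshuffleRecRHS_nil_right (u : List (Fin 2)) : tshuffleRecRHS u c v [] = wd (u ++ c :: v) := by
  simp [tshuffleRecRHS, shuffleSplitSum, shuffleRhoLast_nil_right, shW_nil_right, tshW_nil_right,
    wd_append, ← wd_cons]

lemma tshuffleRecRHS_nil_cons :
    tshuffleRecRHS [] c v (b₁ :: b) =
      wd [c] * tshW v (b₁ :: b) + wd [b₁] * tshuffleRecRHS [] c v b
        - δw v • (ρt c * wd (b₁ :: b)) - δw b • (ρt b₁ * wd (c :: v)) := by
  simp only [tshuffleRecRHS, List.length_cons, shuffleSplitSum_nil_cons, shuffleRhoLast_nil_cons,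
    mul_sub, add_mul, smul_add, mul_smul_comm, smul_mul_assoc, mul_assoc]
  abel

lemma tshuffleRecRHS_cons_cons (a₁ : Fin 2) (u : List (Fin 2)) :
    tshuffleRecRHS (a₁ :: u) c v (b₁ :: b) =
      wd [a₁] * tshuffleRecRHS u c v (b₁ :: b) + wd [b₁] * tshuffleRecRHS (a₁ :: u) c v b
        - δw b • (ρt b₁ * wd (a₁ :: u ++ c :: v)) := by
  simp only [tshuffleRecRHS, List.length_cons, shuffleSplitSum_cons_cons, shuffleRhoLast_cons_cons,
    mul_sub, add_mul, smul_add, mul_smul_comm, smul_mul_assoc, mul_assoc, ← wd_append,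
    List.cons_append]
  abel

end TshuffleRecRHS

theorem tshW_append_cons (u : List (Fin 2)) (c : Fin 2) (v b : List (Fin 2)) :
    tshW (u ++ c :: v) b = tshuffleRecRHS u c v b := by
  induction u generalizing b with
  | nil =>
    rw [List.nil_append]
    induction b with
    | nil => rw [tshW_nil_right, tshuffleRecRHS_nil_right, List.nil_append]
    | cons b₁ b ih => rw [tshW_cons_cons, ih, tshuffleRecRHS_nil_cons]
  | cons a₁ u ihu =>
    induction b with
    | nil => rw [tshW_nil_right, tshuffleRecRHS_nil_right]
    | cons b₁ b ihb =>
      rw [List.cons_append, tshW_cons_cons, ihu, ← List.cons_append, ihb, tshuffleRecRHS_cons_cons,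
        show δw (u ++ c :: v) = 0 by simp [δw], zero_smul, sub_zero]

lemma shH_wd_mul_ρt (u w : List (Fin 2)) (c : Fin 2) :
    shH (wd u) (wd w * ρt c) = rhoCoeff c • shW u (w ++ [0]) := by
  rw [ρt_eq_smul, mul_smul_comm, ← wd_append]
  simp [shH, wd, MonoidAlgebra.of_apply, MonoidAlgebra.smul_single, Finsupp.sum_single_index]

lemma getLast_eq_getLastD_zero {b : List (Fin 2)} (hb : b ≠ []) : b.getLast hb = b.getLastD 0 := by
  rw [List.getLastD_eq_getLast?, List.getLast?_eq_some_getLast hb, Option.getD_some]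

lemma δw_drop {a : List (Fin 2)} {k : ℕ} (hk : k ≤ a.length) :
    δw (a.drop k) = if k = a.length then 1 else 0 := by
  simp only [δw, List.drop_eq_nil_iff, hk.ge_iff_eq]

/-- Recursive formula for the t-shuffle product: for words `a = a₁⋯a_m`, `b = b₁⋯b_n`
and a fixed `k` with `1 ≤ k ≤ m`,
`a ⧢_t b = Σ_{i=0}^{n} (a₁⋯a_{k−1} ⧢ b₁⋯b_i) a_k (a_{k+1}⋯a_m ⧢_t b_{i+1}⋯b_n)
  − (a₁⋯a_{k−1} ⧢ b₁⋯b_{n−1}ρ(b_n)) a_k⋯a_m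
  − δ_{k,m} Σ_{i=0}^{n−1} (a₁⋯a_{m−1} ⧢ b₁⋯b_i) ρ(a_m) b_{i+1}⋯b_n`. -/
theorem tshuffle_recursive (a b : List (Fin 2)) (k : ℕ) (h1 : 1 ≤ k) (h2 : k ≤ a.length)
    (hb : b ≠ []) :
    tshH (wd a) (wd b) =
      (∑ i ∈ Finset.range (b.length + 1),
        shH (wd (a.take (k - 1))) (wd (b.take i)) * wd [a.get ⟨k - 1, by omega⟩] *
          tshH (wd (a.drop k)) (wd (b.drop i))) -
      shH (wd (a.take (k - 1))) (wd b.dropLast * ρt (b.getLast hb)) * wd (a.drop (k - 1)) -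
      (if k = a.length then (1 : Rt) else 0) •
        ∑ i ∈ Finset.range b.length,
          shH (wd a.dropLast) (wd (b.take i)) *
            ρt (a.getLast (List.ne_nil_of_length_pos (by omega))) * wd (b.drop i) := by
  have hdrop : a.drop (k - 1) = a[k - 1] :: a.drop k := by
    rw [List.drop_eq_getElem_cons, Nat.sub_add_cancel h1]
  have hsplit := tshW_append_cons (a.take (k - 1)) a[k - 1] (a.drop k) b
  rw [← hdrop, List.take_append_drop] at hsplit
  rw [tshH_wd_wd, hsplit, tshuffleRecRHS, shuffleSplitSum, shuffleSplitSum,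
    shuffleRhoLast, shH_wd_mul_ρt, ← getLast_eq_getLastD_zero hb, hdrop, δw_drop h2]
  refine congrArg₂ (· - ·) (congrArg₂ (· - ·) ?_ rfl) ?_
  · refine Finset.sum_congr rfl fun i _ => ?_
    rw [shH_wd_wd, tshH_wd_wd, List.get_eq_getElem, mul_assoc]
  · split_ifs with hk
    · subst hk
      simp only [← List.dropLast_eq_take, List.getLast_eq_getElem, shH_wd_wd, mul_assoc]
    · simp only [zero_smul]
end
end

section
/- ζ*(9,1) = ζ(2)ζ(8) − ζ(3)ζ(7) + ζ(4)ζ(6) − (1/2) ζ(5)², where ζ*(a,b) = Σ_{m ≥ n ≥ 1} m^{−a} n^{−b}. -/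
/-!
For `m > n` write `m = n + d`. The geometric sum in `1/m` and `1/n` gives the partial fraction
identity `∑_{i+j=k} 1/(m^(i+2) n^(j+2)) = 1/(d m n^(k+2)) - 1/(d m^(k+2) n)`. Summed over `d`, the
first term telescopes to `H_n / n^(k+3)` (`H_n` the harmonic number), so it contributes
`ζ*(k+3,1)`; since `1/(d m^(k+2) n) = 1/(m^(k+3) d) + 1/(m^(k+3) n)`, the second contributes
`2 ζ(k+3,1)`. Adding the mirror image `m < n` and the diagonal `m = n` gives Euler's formula
`∑_{i+j=k} ζ(i+2) ζ(j+2) = (k+3) ζ(k+4) - 2 ζ(k+3,1)`. For `k = 6`, together with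
`ζ*(9,1) = ζ(9,1) + ζ(10)` and `11 ζ(10) = 4 ζ(2) ζ(8) + 4 ζ(4) ζ(6)` (from the Bernoulli number
formula for even zeta values), this is the claim.
-/

open scoped BigOperators

noncomputable section

/-- The Riemann zeta value `ζ(s) = Σ_{n ≥ 1} 1/n^s`. -/
def zeta (s : ℕ) : ℝ := ∑' n : ℕ, 1 / ((n : ℝ) + 1) ^ s

/-- The double zeta-star value `ζ*(a,b) = Σ_{m ≥ n ≥ 1} 1/(m^a n^b)`. -/
def zetaStar (a b : ℕ) : ℝ :=
  ∑' p : {q : ℕ × ℕ // q.2 ≤ q.1}, 1 / (((p.1.1 : ℝ) + 1) ^ a * ((p.1.2 : ℝ) + 1) ^ b)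

/-- The double zeta value `ζ(a,b) = Σ_{m > n ≥ 1} 1/(m^a n^b)`. -/
def dzeta (a b : ℕ) : ℝ :=
  ∑' p : {q : ℕ × ℕ // q.2 < q.1}, 1 / (((p.1.1 : ℝ) + 1) ^ a * ((p.1.2 : ℝ) + 1) ^ b)

open Finset Filter Topology

theorem hasSum_prod_of_nonneg {β γ : Type*} {f : β × γ → ℝ} (hf : 0 ≤ f) {g : β → ℝ} {a : ℝ}
    (hrow : ∀ b, HasSum (fun c => f (b, c)) (g b)) (hg : HasSum g a) : HasSum f a := by
  have hs : Summable f := (summable_prod_of_nonneg hf).2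
    ⟨fun b => (hrow b).summable, by simpa only [fun b => (hrow b).tsum_eq] using hg.summable⟩
  exact (hs.hasSum.prod_fiberwise hrow).unique hg ▸ hs.hasSum

theorem hasSum_subtype_of_fiber_eq_range {f : ℕ × ℕ → ℝ} (hf : 0 ≤ f) {s : Set (ℕ × ℕ)}
    {r : ℕ → ℕ} (hs : ∀ m n, (m, n) ∈ s ↔ n < r m) {a : ℝ}
    (h : HasSum (fun m => ∑ n ∈ range (r m), f (m, n)) a) : HasSum (fun q : s => f q) a := by
  refine hasSum_subtype_iff_indicator.2 <| hasSum_prod_of_nonneg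
    (Set.indicator_nonneg fun q _ => hf q) (fun m => ?_) h
  have hrow : HasSum (fun n => s.indicator f (m, n)) _ :=
    hasSum_sum_of_ne_finset_zero (s := range (r m)) fun n hn =>
      Set.indicator_of_notMem (f := f) (by rwa [hs, ← mem_range])
  rwa [sum_congr rfl fun n hn => Set.indicator_of_mem ((hs m n).2 (mem_range.1 hn)) f] at hrow

theorem hasSum_of_lower_upper_diag {α β : Type*} [AddCommMonoid α] [TopologicalSpace α]
    [ContinuousAdd α] [LinearOrder β] {f : β × β → α} {a b c : α}
    (hlow : HasSum (fun q : {q : β × β // q.2 < q.1} => f q) a)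
    (hup : HasSum (fun q : {q : β × β // q.2 < q.1} => f q.1.swap) b)
    (hdiag : HasSum (fun n => f (n, n)) c) : HasSum f (a + b + c) := by
  set L : Set (β × β) := {q | q.2 < q.1}
  have hlow' : HasSum (L.indicator f) a := hasSum_subtype_iff_indicator.1 hlow
  have hup' : HasSum (L.indicator (f ∘ Prod.swap) ∘ Prod.swap) b :=
    (Equiv.prodComm β β).hasSum_iff.2 (hasSum_subtype_iff_indicator.1 hup)
  have hinj : Function.Injective fun n : β => (n, n) := fun n m h => congrArg Prod.fst h
  have hdiag' : HasSum ((Set.range fun n : β => (n, n)).indicator f) c :=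
    hasSum_subtype_iff_indicator.1 (hinj.hasSum_range_iff.2 hdiag)
  convert (hlow'.add hup').add hdiag' using 1
  funext ⟨m, n⟩
  rcases lt_trichotomy n m with h | rfl | h
  · simp [L, h, h.not_gt, h.ne']
  · simp [L]
  · simp [L, h, h.not_gt, h.ne]

def lowerTriangleEquiv : ℕ × ℕ ≃ {q : ℕ × ℕ // q.2 < q.1} where
  toFun p := ⟨(p.1 + p.2 + 1, p.1), by simp only; omega⟩
  invFun q := (q.1.2, q.1.1 - q.1.2 - 1)
  left_inv p := by ext <;> simp; omega
  right_inv q := by ext <;> simp; have := q.2; omega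

theorem hasSum_sub_succ_of_antitone {f : ℕ → ℝ} (hf : Antitone f) {l : ℝ}
    (hl : Tendsto f atTop (𝓝 l)) : HasSum (fun n => f n - f (n + 1)) (f 0 - l) := by
  rw [hasSum_iff_tendsto_nat_of_nonneg fun n => sub_nonneg.2 (hf n.le_succ)]
  simpa only [sum_range_sub'] using tendsto_const_nhds.sub hl

theorem hasSum_one_div_sub_one_div_add (c : ℕ) :
    HasSum (fun x : ℕ => 1 / ((x : ℝ) + 1) - 1 / ((x : ℝ) + 1 + c))
      (∑ n ∈ range c, 1 / ((n : ℝ) + 1)) := by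
  induction c with
  | zero => simp
  | succ c ih =>
    have hanti : Antitone fun x : ℕ => 1 / ((x : ℝ) + 1 + c) := fun x y hxy => by
      dsimp only; gcongr
    have hlim : Tendsto (fun x : ℕ => 1 / ((x : ℝ) + 1 + c)) atTop (𝓝 0) :=
      tendsto_const_nhds.div_atTop <| tendsto_atTop_add_const_right _ _ <|
        tendsto_atTop_add_const_right _ _ tendsto_natCast_atTop_atTop
    convert ih.add (hasSum_sub_succ_of_antitone hanti hlim) using 1
    · funext x; push_cast; ring
    · rw [sum_range_succ]; simp [add_comm]

theorem sum_antidiagonal_one_div_pow_mul_pow {K : Type*} [Field K] {x y : K} (hx : x ≠ 0)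
    (hy : y ≠ 0) (hxy : x + y ≠ 0) (k : ℕ) :
    ∑ ij ∈ antidiagonal k, 1 / ((x + y) ^ (ij.1 + 2) * y ^ (ij.2 + 2)) =
      1 / (x * (x + y) * y ^ (k + 2)) - 1 / (x * (x + y) ^ (k + 2) * y) := by
  set u := (x + y)⁻¹
  set v := y⁻¹
  have hgeom : (∑ ij ∈ antidiagonal k, u ^ ij.1 * v ^ ij.2) * (u - v) =
      u ^ (k + 1) - v ^ (k + 1) := by
    rw [Nat.sum_antidiagonal_eq_sum_range_succ (fun i j => u ^ i * v ^ j), ← geom_sum₂_mul]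
    simp
  have hterm : ∀ ij ∈ antidiagonal k, 1 / ((x + y) ^ (ij.1 + 2) * y ^ (ij.2 + 2)) =
      u ^ 2 * v ^ 2 * (u ^ ij.1 * v ^ ij.2) := fun ij _ => by
    simp only [u, v, pow_add, inv_pow]; field_simp
  have hdiff : u - v = -(x * u * v) := by simp only [u, v]; field_simp; ring
  have hrhs : 1 / (x * (x + y) * y ^ (k + 2)) - 1 / (x * (x + y) ^ (k + 2) * y) =
      (u * v ^ (k + 2) - u ^ (k + 2) * v) / x := by
    simp only [u, v, inv_pow]; field_simp
  rw [sum_congr rfl hterm, ← mul_sum, hrhs, eq_div_iff hx]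
  linear_combination (-(u * v)) * hgeom +
    (u * v * ∑ ij ∈ antidiagonal k, u ^ ij.1 * v ^ ij.2) * hdiff

def zetaTerm (a b : ℕ) (p : ℕ × ℕ) : ℝ := 1 / (((p.1 : ℝ) + 1) ^ a * ((p.2 : ℝ) + 1) ^ b)

theorem hasSum_zeta {s : ℕ} (hs : 2 ≤ s) :
    HasSum (fun n : ℕ => 1 / ((n : ℝ) + 1) ^ s) (zeta s) := by
  have h := (summable_nat_add_iff 1).2 (Real.summable_one_div_nat_pow.2 hs)
  exact (h.congr fun n => by push_cast; rfl).hasSum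

theorem hasSum_zetaTerm {a b : ℕ} (ha : 2 ≤ a) (hb : 2 ≤ b) :
    HasSum (zetaTerm a b) (zeta a * zeta b) := by
  have hprod := (hasSum_zeta ha).summable.mul_of_nonneg (hasSum_zeta hb).summable
    (fun _ => by positivity) (fun _ => by positivity)
  have h := (hasSum_zeta ha).mul (hasSum_zeta hb) hprod
  simp only [one_div_mul_one_div] at h
  exact h

theorem summable_sum_range_div_pow {a : ℕ} (ha : 3 ≤ a) (b : ℕ) {r : ℕ → ℕ}
    (hr : ∀ m, r m ≤ m + 1) :
    Summable fun m : ℕ => (∑ n ∈ range (r m), 1 / ((n : ℝ) + 1) ^ b) / ((m : ℝ) + 1) ^ a := by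
  obtain ⟨c, rfl⟩ : ∃ c, a = c + 1 := ⟨a - 1, by omega⟩
  refine (hasSum_zeta (by omega : 2 ≤ c)).summable.of_nonneg_of_le (fun m => by positivity)
    fun m => ?_
  have hsum : ∑ n ∈ range (r m), 1 / ((n : ℝ) + 1) ^ b ≤ (m : ℝ) + 1 :=
    calc ∑ n ∈ range (r m), 1 / ((n : ℝ) + 1) ^ b ≤ ∑ n ∈ range (r m), (1 : ℝ) :=
          sum_le_sum fun n _ => div_le_one_of_le₀
            (one_le_pow₀ (by linarith [n.cast_nonneg (α := ℝ)])) (by positivity)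
      _ ≤ (m : ℝ) + 1 := by simpa using (Nat.cast_le (α := ℝ)).2 (hr m)
  calc (∑ n ∈ range (r m), 1 / ((n : ℝ) + 1) ^ b) / ((m : ℝ) + 1) ^ (c + 1)
      ≤ ((m : ℝ) + 1) / ((m : ℝ) + 1) ^ (c + 1) := by gcongr
    _ = 1 / ((m : ℝ) + 1) ^ c := by field_simp; ring

theorem hasSum_subtype_zetaTerm {a : ℕ} (ha : 3 ≤ a) (b : ℕ) {s : Set (ℕ × ℕ)} {r : ℕ → ℕ}
    (hr : ∀ m, r m ≤ m + 1) (hs : ∀ m n, (m, n) ∈ s ↔ n < r m) :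
    HasSum (fun q : s => zetaTerm a b q)
      (∑' m : ℕ, (∑ n ∈ range (r m), 1 / ((n : ℝ) + 1) ^ b) / ((m : ℝ) + 1) ^ a) := by
  refine hasSum_subtype_of_fiber_eq_range (fun p => by unfold zetaTerm; positivity) hs ?_
  convert (summable_sum_range_div_pow ha b hr).hasSum using 2 with m
  rw [sum_div]
  refine sum_congr rfl fun n _ => ?_
  rw [zetaTerm, div_div, mul_comm]

theorem dzeta_eq_tsum_sum_range {a : ℕ} (ha : 3 ≤ a) (b : ℕ) :
    dzeta a b = ∑' m : ℕ, (∑ n ∈ range m, 1 / ((n : ℝ) + 1) ^ b) / ((m : ℝ) + 1) ^ a :=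
  (hasSum_subtype_zetaTerm ha b (s := {q | q.2 < q.1}) (fun m => m.le_succ)
    fun _ _ => Iff.rfl).tsum_eq

theorem hasSum_dzeta {a : ℕ} (ha : 3 ≤ a) (b : ℕ) :
    HasSum (fun q : {q : ℕ × ℕ // q.2 < q.1} => zetaTerm a b q) (dzeta a b) := by
  rw [dzeta_eq_tsum_sum_range ha]
  exact hasSum_subtype_zetaTerm ha b (fun m => m.le_succ) fun _ _ => Iff.rfl

theorem hasSum_zetaStar_sum_range {a : ℕ} (ha : 3 ≤ a) (b : ℕ) :
    HasSum (fun m : ℕ => (∑ n ∈ range (m + 1), 1 / ((n : ℝ) + 1) ^ b) / ((m : ℝ) + 1) ^ a)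
      (zetaStar a b) := by
  have h : zetaStar a b = _ := (hasSum_subtype_zetaTerm ha b (s := {q | q.2 ≤ q.1})
    (fun m => le_rfl) fun _ _ => Nat.lt_succ_iff.symm).tsum_eq
  exact h ▸ (summable_sum_range_div_pow ha b fun m => le_rfl).hasSum

theorem zetaStar_eq_dzeta_add_zeta {a : ℕ} (ha : 3 ≤ a) (b : ℕ) :
    zetaStar a b = dzeta a b + zeta (a + b) := by
  rw [dzeta_eq_tsum_sum_range ha, zeta, ← Summable.tsum_add
    (summable_sum_range_div_pow ha b fun m => m.le_succ) (hasSum_zeta (by omega)).summable]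
  refine (hasSum_zetaStar_sum_range ha b).tsum_eq.symm.trans (tsum_congr fun m => ?_)
  rw [sum_range_succ, add_div, div_div, pow_add, mul_comm]

def zetaConvTerm (k : ℕ) (p : ℕ × ℕ) : ℝ :=
  ∑ ij ∈ antidiagonal k, zetaTerm (ij.1 + 2) (ij.2 + 2) p

theorem hasSum_zetaConvTerm (k : ℕ) :
    HasSum (zetaConvTerm k) (∑ ij ∈ antidiagonal k, zeta (ij.1 + 2) * zeta (ij.2 + 2)) :=
  hasSum_sum fun _ _ => hasSum_zetaTerm (by omega) (by omega)

theorem zetaConvTerm_swap (k : ℕ) (p : ℕ × ℕ) : zetaConvTerm k p.swap = zetaConvTerm k p := by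
  rw [zetaConvTerm, zetaConvTerm, ← Nat.sum_antidiagonal_swap]
  exact sum_congr rfl fun ij _ => by simp only [zetaTerm, Prod.fst_swap, Prod.snd_swap, mul_comm]

theorem zetaConvTerm_diag (k n : ℕ) :
    zetaConvTerm k (n, n) = (k + 1) * (1 / ((n : ℝ) + 1) ^ (k + 4)) := by
  rw [zetaConvTerm, sum_congr rfl fun ij hij => ?_, sum_const, Nat.card_antidiagonal, nsmul_eq_mul]
  · push_cast; rfl
  rw [zetaTerm, ← pow_add, ← (mem_antidiagonal.1 hij)]
  ring_nf

/- With `n = p.1 + 1` and `d = p.2 + 1`, `lowerTriangleEquiv p` is the point `(n + d, n)` in 1-based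
indices, and this is the partial fraction identity with gap `d`. -/
theorem zetaConvTerm_lowerTriangleEquiv (k : ℕ) (p : ℕ × ℕ) :
    zetaConvTerm k (lowerTriangleEquiv p) =
      1 / (((p.2 : ℝ) + 1) * (((p.2 : ℝ) + 1) + ((p.1 : ℝ) + 1)) * ((p.1 : ℝ) + 1) ^ (k + 2)) -
      1 / (((p.2 : ℝ) + 1) * (((p.2 : ℝ) + 1) + ((p.1 : ℝ) + 1)) ^ (k + 2) * ((p.1 : ℝ) + 1)) := by
  rw [← sum_antidiagonal_one_div_pow_mul_pow (by positivity) (by positivity) (by positivity)]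
  refine sum_congr rfl fun ij _ => ?_
  simp only [zetaTerm, lowerTriangleEquiv, Equiv.coe_fn_mk]
  push_cast
  ring_nf

theorem hasSum_one_div_mul_add_mul_pow (k : ℕ) :
    HasSum (fun p : ℕ × ℕ =>
        1 / (((p.2 : ℝ) + 1) * (((p.2 : ℝ) + 1) + ((p.1 : ℝ) + 1)) * ((p.1 : ℝ) + 1) ^ (k + 2)))
      (zetaStar (k + 3) 1) := by
  refine hasSum_prod_of_nonneg (fun p => by positivity) (fun n => ?_)
    (by simpa only [pow_one] using hasSum_zetaStar_sum_range (by omega : 3 ≤ k + 3) 1)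
  convert (hasSum_one_div_sub_one_div_add (n + 1)).div_const (((n : ℝ) + 1) ^ (k + 3))
    using 2 with x
  · rfl
  · push_cast
    field_simp
    ring

theorem hasSum_one_div_mul_add_pow_mul (k : ℕ) :
    HasSum (fun p : ℕ × ℕ =>
        1 / (((p.2 : ℝ) + 1) * (((p.2 : ℝ) + 1) + ((p.1 : ℝ) + 1)) ^ (k + 2) * ((p.1 : ℝ) + 1)))
      (2 * dzeta (k + 3) 1) := by
  have hlower : HasSum (fun p : ℕ × ℕ =>
      1 / ((((p.2 : ℝ) + 1) + ((p.1 : ℝ) + 1)) ^ (k + 3) * ((p.1 : ℝ) + 1)))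
      (dzeta (k + 3) 1) := by
    convert lowerTriangleEquiv.hasSum_iff.2 (hasSum_dzeta (by omega : 3 ≤ k + 3) 1) using 1
    funext p
    simp only [Function.comp_apply, zetaTerm, lowerTriangleEquiv, Equiv.coe_fn_mk]
    push_cast
    ring_nf
  have hgap := (Equiv.prodComm ℕ ℕ).hasSum_iff.2 hlower
  convert hlower.add hgap using 1
  · funext p
    simp only [Function.comp_apply, Equiv.prodComm_apply, Prod.fst_swap, Prod.snd_swap]
    field_simp
    ring
  · ring

theorem hasSum_zetaConvTerm_lowerTriangle (k : ℕ) :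
    HasSum (fun q : {q : ℕ × ℕ // q.2 < q.1} => zetaConvTerm k q)
      (zetaStar (k + 3) 1 - 2 * dzeta (k + 3) 1) := by
  rw [← lowerTriangleEquiv.hasSum_iff, Function.comp_def]
  simp only [zetaConvTerm_lowerTriangleEquiv]
  exact (hasSum_one_div_mul_add_mul_pow k).sub (hasSum_one_div_mul_add_pow_mul k)

theorem sum_antidiagonal_zeta_mul_zeta (k : ℕ) :
    ∑ ij ∈ antidiagonal k, zeta (ij.1 + 2) * zeta (ij.2 + 2) =
      (k + 3) * zeta (k + 4) - 2 * dzeta (k + 3) 1 := by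
  have hlow := hasSum_zetaConvTerm_lowerTriangle k
  have hup : HasSum (fun q : {q : ℕ × ℕ // q.2 < q.1} => zetaConvTerm k q.1.swap)
      (zetaStar (k + 3) 1 - 2 * dzeta (k + 3) 1) := by
    simpa only [zetaConvTerm_swap] using hlow
  have hdiag : HasSum (fun n => zetaConvTerm k (n, n)) ((k + 1) * zeta (k + 4)) := by
    simpa only [zetaConvTerm_diag] using (hasSum_zeta (by omega)).mul_left ((k : ℝ) + 1)
  rw [(hasSum_zetaConvTerm k).unique (hasSum_of_lower_upper_diag hlow hup hdiag),
    zetaStar_eq_dzeta_add_zeta (by omega)]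
  ring

section EvenZetaValues

open Real

theorem zeta_two_mul {k : ℕ} (hk : k ≠ 0) :
    zeta (2 * k) = (-1) ^ (k + 1) * 2 ^ (2 * k - 1) * π ^ (2 * k) * bernoulli (2 * k) /
      (2 * k).factorial := by
  refine HasSum.tsum_eq ?_
  simpa [hk] using (hasSum_nat_add_iff' 1).2 (hasSum_zeta_nat hk)

theorem bernoulli'_six : bernoulli' 6 = 1 / 42 := by
  rw [bernoulli'_def]
  norm_num [sum_range_succ, Nat.choose, bernoulli'_eq_zero_of_odd (by decide : Odd 5)]

theorem bernoulli'_eight : bernoulli' 8 = -1 / 30 := by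
  rw [bernoulli'_def]
  norm_num [sum_range_succ, Nat.choose, bernoulli'_six,
    bernoulli'_eq_zero_of_odd (by decide : Odd 5), bernoulli'_eq_zero_of_odd (by decide : Odd 7)]

theorem bernoulli'_ten : bernoulli' 10 = 5 / 66 := by
  rw [bernoulli'_def]
  norm_num [sum_range_succ, Nat.choose, bernoulli'_six, bernoulli'_eight,
    bernoulli'_eq_zero_of_odd (by decide : Odd 5), bernoulli'_eq_zero_of_odd (by decide : Odd 7),
    bernoulli'_eq_zero_of_odd (by decide : Odd 9)]

theorem zeta_two : zeta 2 = π ^ 2 / 6 := by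
  have h := zeta_two_mul (k := 1) (by norm_num)
  norm_num [bernoulli_eq_bernoulli'_of_ne_one, Nat.factorial] at h
  rw [h]; ring

theorem zeta_four : zeta 4 = π ^ 4 / 90 := by
  have h := zeta_two_mul (k := 2) (by norm_num)
  norm_num [bernoulli_eq_bernoulli'_of_ne_one, Nat.factorial, bernoulli'_four] at h
  rw [h]; ring

theorem zeta_six : zeta 6 = π ^ 6 / 945 := by
  have h := zeta_two_mul (k := 3) (by norm_num)
  norm_num [bernoulli_eq_bernoulli'_of_ne_one, Nat.factorial, bernoulli'_six] at h
  rw [h]; ring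

theorem zeta_eight : zeta 8 = π ^ 8 / 9450 := by
  have h := zeta_two_mul (k := 4) (by norm_num)
  norm_num [bernoulli_eq_bernoulli'_of_ne_one, Nat.factorial, bernoulli'_eight] at h
  rw [h]; ring

theorem zeta_ten : zeta 10 = π ^ 10 / 93555 := by
  have h := zeta_two_mul (k := 5) (by norm_num)
  norm_num [bernoulli_eq_bernoulli'_of_ne_one, Nat.factorial, bernoulli'_ten] at h
  rw [h]; ring

end EvenZetaValues

/-- `ζ*(9,1) = ζ(2)ζ(8) − ζ(3)ζ(7) + ζ(4)ζ(6) − (1/2)ζ(5)²`. -/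
theorem zetaStar_nine_one :
    zetaStar 9 1 =
      zeta 2 * zeta 8 - zeta 3 * zeta 7 + zeta 4 * zeta 6 - 1 / 2 * zeta 5 ^ 2 := by
  have hstar : zetaStar 9 1 = dzeta 9 1 + zeta 10 := zetaStar_eq_dzeta_add_zeta (by norm_num) 1
  have heuler := sum_antidiagonal_zeta_mul_zeta 6
  norm_num [Nat.sum_antidiagonal_eq_sum_range_succ_mk, sum_range_succ] at heuler
  rw [hstar]
  rw [zeta_two, zeta_four, zeta_six, zeta_eight, zeta_ten] at heuler ⊢
  linear_combination (1 / 2 : ℝ) * heuler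

end
end

section
/- The Euler decomposition formula: for integers i, j ≥ 2, ζ(i) ζ(j) = Σ_{k=1}^{i} C(i+j−k−1, j−1) ζ(i+j−k, k) + Σ_{k=1}^{j} C(i+j−k−1, i−1) ζ(i+j−k, k), where ζ(a, b) = Σ_{m > n ≥ 1} m^{−a} n^{−b} is the double zeta value (with the convention that the terms with k = 1 involve the conditionally interpretable ζ(i+j−1, 1) which converges since i+j−1 ≥ 3). -/
open scoped BigOperators

noncomputable section

/-!
Partial fractions: for `x, y, x + y ≠ 0` and `i + j ≥ 1`,
`1/(x^i y^j) = Σ_{k=1}^{i} C(i+j-k-1, i-k)/((x+y)^{i+j-k} x^k) + (the same with x, i ↔ y, j)`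
by induction on `i + j`, from `(x + y)/(x^i y^j) = 1/(x^{i-1} y^j) + 1/(x^i y^{j-1})` and Pascal's
rule.
Put `x = m`, `y = n` and sum over `m, n ≥ 1`: the left side becomes `ζ(i) ζ(j)`, and summing
`1/((m+n)^{i+j-k} m^k)` over `m, n ≥ 1` is `ζ(i+j-k, k)` (substitute `M = m + n > m`).
All terms are nonnegative, so every series involved converges because the left one does.
-/

open Finset

section PartialFractions

variable {K : Type*} [Field K]

/-- With truncated subtraction the coefficient `C(i+j-k-1, i-k)` equals `C(i+j-k-1, j-1)` when
`j ≥ 1`, while for `j = 0` it is `1` at `k = i` and `0` otherwise, so that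
`eulerPartialSum x y i 0 = 1 / x ^ i` for `i ≠ 0` and the boundary cases of the induction are
trivial. -/
def eulerPartialSum (x y : K) (i j : ℕ) : K :=
  ∑ k ∈ Icc 1 i, ((i + j - k - 1).choose (i - k) : K) / ((x + y) ^ (i + j - k) * x ^ k)

@[simp]
lemma eulerPartialSum_zero_left (x y : K) (j : ℕ) : eulerPartialSum x y 0 j = 0 := by
  simp [eulerPartialSum]

lemma eulerPartialSum_zero_right (x y : K) {i : ℕ} (hi : i ≠ 0) :
    eulerPartialSum x y i 0 = 1 / x ^ i := by
  obtain ⟨i, rfl⟩ := Nat.exists_eq_add_one_of_ne_zero hi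
  rw [eulerPartialSum, sum_Icc_succ_top (by omega), sum_eq_zero]
  · simp
  · intro k hk
    rw [Nat.choose_eq_zero_of_lt (by grind), Nat.cast_zero, zero_div]

lemma mul_eulerPartialSum_succ_succ {x y : K} (hxy : x + y ≠ 0) (i j : ℕ) :
    (x + y) * eulerPartialSum x y (i + 1) (j + 1) =
      eulerPartialSum x y i (j + 1) + eulerPartialSum x y (i + 1) j := by
  simp only [eulerPartialSum]
  rw [sum_Icc_succ_top (by omega), sum_Icc_succ_top (by omega), mul_add, mul_sum]
  have pascal : ∀ k ∈ Icc 1 i,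
      (x + y) * (((i + 1 + (j + 1) - k - 1).choose (i + 1 - k) : K) /
        ((x + y) ^ (i + 1 + (j + 1) - k) * x ^ k)) =
      ((i + (j + 1) - k - 1).choose (i - k) : K) / ((x + y) ^ (i + (j + 1) - k) * x ^ k) +
      ((i + 1 + j - k - 1).choose (i + 1 - k) : K) / ((x + y) ^ (i + 1 + j - k) * x ^ k) := by
    intro k hk
    obtain ⟨m, rfl⟩ : ∃ m, i = k + m := ⟨i - k, by grind⟩
    rw [show k + m + 1 + (j + 1) - k - 1 = (m + j) + 1 by omega,
      show k + m + 1 - k = m + 1 by omega, Nat.choose_succ_succ',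
      show k + m + (j + 1) - k - 1 = m + j by omega,
      show k + m - k = m by omega, show k + m + 1 + j - k - 1 = m + j by omega,
      show k + m + 1 + (j + 1) - k = (m + j + 1) + 1 by omega,
      show k + m + (j + 1) - k = m + j + 1 by omega, show k + m + 1 + j - k = m + j + 1 by omega,
      pow_succ]
    push_cast
    field_simp
  rw [sum_congr rfl pascal, sum_add_distrib]
  simp only [Nat.sub_self, Nat.choose_zero_right, Nat.cast_one, pow_succ,
    show i + 1 + (j + 1) - (i + 1) = j + 1 by omega, show i + 1 + j - (i + 1) = j by omega]
  field_simp
  ring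

theorem one_div_pow_mul_pow_eq_eulerPartialSum {x y : K} (hx : x ≠ 0) (hy : y ≠ 0)
    (hxy : x + y ≠ 0) {i j : ℕ} (hij : i + j ≠ 0) :
    1 / (x ^ i * y ^ j) = eulerPartialSum x y i j + eulerPartialSum y x j i := by
  induction i generalizing j with
  | zero => simp [eulerPartialSum_zero_right y x (by simpa using hij)]
  | succ i ihi =>
    induction j with
    | zero => simp [eulerPartialSum_zero_right x y (Nat.succ_ne_zero i)]
    | succ j ihj =>
      have hyx : y + x ≠ 0 := by rwa [add_comm]
      apply mul_left_cancel₀ hxy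
      calc (x + y) * (1 / (x ^ (i + 1) * y ^ (j + 1)))
          = 1 / (x ^ i * y ^ (j + 1)) + 1 / (x ^ (i + 1) * y ^ j) := by field_simp; ring
        _ = (x + y) * eulerPartialSum x y (i + 1) (j + 1) +
              (y + x) * eulerPartialSum y x (j + 1) (i + 1) := by
          rw [ihi (by omega), ihj (by omega), mul_eulerPartialSum_succ_succ hxy,
            mul_eulerPartialSum_succ_succ hyx]
          ring
        _ = _ := by rw [add_comm y x, mul_add]

lemma eulerPartialSum_eq_sum_choose_mul {x y : K} {i j : ℕ} (hj : j ≠ 0) :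
    eulerPartialSum x y i j =
      ∑ k ∈ Icc 1 i,
        ((i + j - k - 1).choose (j - 1) : K) * (1 / ((x + y) ^ (i + j - k) * x ^ k)) := by
  refine sum_congr rfl fun k hk => ?_
  rw [mul_one_div, Nat.choose_symm_of_eq_add (b := j - 1) (by grind)]

end PartialFractions

lemma eulerPartialSum_nonneg {L : Type*} [Field L] [LinearOrder L] [IsStrictOrderedRing L]
    {x y : L} (hx : 0 ≤ x) (hy : 0 ≤ y) (i j : ℕ) : 0 ≤ eulerPartialSum x y i j := by
  unfold eulerPartialSum
  positivity

theorem Summable.tsum_finsetSum_of_nonneg {ι β : Type*} {s : Finset ι} {f : ι → β → ℝ}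
    (hf : ∀ k ∈ s, ∀ b, 0 ≤ f k b) (h : Summable fun b ↦ ∑ k ∈ s, f k b) :
    ∑' b, ∑ k ∈ s, f k b = ∑ k ∈ s, ∑' b, f k b :=
  Summable.tsum_finsetSum fun k hk ↦ h.of_nonneg_of_le (hf k hk) fun b ↦
    single_le_sum (fun k hk ↦ hf k hk b) hk

lemma summable_one_div_nat_add_one_pow {s : ℕ} (hs : 2 ≤ s) :
    Summable fun n : ℕ ↦ 1 / ((n : ℝ) + 1) ^ s := by
  simpa using (summable_nat_add_iff 1).2 (Real.summable_one_div_nat_pow.2 hs)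

lemma hasSum_zeta_mul_zeta {i j : ℕ} (hi : 2 ≤ i) (hj : 2 ≤ j) :
    HasSum (fun p : ℕ × ℕ ↦ 1 / ((p.1 : ℝ) + 1) ^ i * (1 / ((p.2 : ℝ) + 1) ^ j))
      (zeta i * zeta j) := by
  have hi' := summable_one_div_nat_add_one_pow hi
  have hj' := summable_one_div_nat_add_one_pow hj
  have h := hi'.mul_of_nonneg hj' (fun n ↦ by positivity) (fun n ↦ by positivity)
  rw [zeta, zeta, hi'.tsum_mul_tsum hj' h]
  exact h.hasSum

def ltPairEquiv : ℕ × ℕ ≃ {q : ℕ × ℕ // q.2 < q.1} where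
  toFun p := ⟨(p.1 + p.2 + 1, p.1), by omega⟩
  invFun q := (q.1.2, q.1.1 - q.1.2 - 1)
  left_inv p := by ext <;> simp; omega
  right_inv q := by ext <;> simp; grind

lemma dzeta_eq_tsum (a b : ℕ) :
    dzeta a b = ∑' p : ℕ × ℕ,
      1 / (((p.1 : ℝ) + 1 + ((p.2 : ℝ) + 1)) ^ a * ((p.1 : ℝ) + 1) ^ b) := by
  rw [dzeta, ← ltPairEquiv.tsum_eq]
  refine tsum_congr fun p ↦ ?_
  simp only [ltPairEquiv, Equiv.coe_fn_mk]
  push_cast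
  ring_nf

lemma tsum_eulerPartialSum {i j : ℕ} (hj : j ≠ 0)
    (h : Summable fun p : ℕ × ℕ ↦ eulerPartialSum ((p.1 : ℝ) + 1) ((p.2 : ℝ) + 1) i j) :
    ∑' p : ℕ × ℕ, eulerPartialSum ((p.1 : ℝ) + 1) ((p.2 : ℝ) + 1) i j =
      ∑ k ∈ Icc 1 i, ((i + j - k - 1).choose (j - 1) : ℝ) * dzeta (i + j - k) k := by
  simp only [eulerPartialSum_eq_sum_choose_mul hj] at h ⊢
  rw [h.tsum_finsetSum_of_nonneg fun k _ p ↦ by positivity]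
  simp only [tsum_mul_left, dzeta_eq_tsum]

/-- Euler decomposition formula: for `i, j ≥ 2`,
`ζ(i)ζ(j) = Σ_{k=1}^{i} C(i+j−k−1, j−1) ζ(i+j−k, k) + Σ_{k=1}^{j} C(i+j−k−1, i−1) ζ(i+j−k, k)`. -/
theorem euler_decomposition (i j : ℕ) (hi : 2 ≤ i) (hj : 2 ≤ j) :
    zeta i * zeta j =
      (∑ k ∈ Finset.Icc 1 i, ((i + j - k - 1).choose (j - 1) : ℝ) * dzeta (i + j - k) k) +
      (∑ k ∈ Finset.Icc 1 j, ((i + j - k - 1).choose (i - 1) : ℝ) * dzeta (i + j - k) k) := by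
  set F : ℕ → ℕ → ℕ × ℕ → ℝ :=
    fun a b p ↦ eulerPartialSum ((p.1 : ℝ) + 1) ((p.2 : ℝ) + 1) a b
  have hF_nonneg (a b : ℕ) (p : ℕ × ℕ) : 0 ≤ F a b p :=
    eulerPartialSum_nonneg (by positivity) (by positivity) a b
  have hdec (p : ℕ × ℕ) :
      1 / ((p.1 : ℝ) + 1) ^ i * (1 / ((p.2 : ℝ) + 1) ^ j) = F i j p + F j i p.swap := by
    rw [one_div_mul_one_div]
    exact one_div_pow_mul_pow_eq_eulerPartialSum (by positivity) (by positivity) (by positivity)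
      (by omega)
  have hprod := (hasSum_zeta_mul_zeta hi hj).congr_fun fun p ↦ (hdec p).symm
  have hsum_ij : Summable (F i j) :=
    hprod.summable.of_nonneg_of_le (hF_nonneg i j) fun p ↦
      le_add_of_nonneg_right (hF_nonneg j i _)
  have hsum_ji : Summable fun p : ℕ × ℕ ↦ F j i p.swap :=
    hprod.summable.of_nonneg_of_le (fun p ↦ hF_nonneg j i _) fun p ↦
      le_add_of_nonneg_left (hF_nonneg i j _)
  have hswap : ∑' p : ℕ × ℕ, F j i p.swap = ∑' p, F j i p :=
    (Equiv.prodComm ℕ ℕ).tsum_eq (F j i)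
  rw [← hprod.tsum_eq, hsum_ij.tsum_add hsum_ji, hswap,
    tsum_eulerPartialSum (by omega) hsum_ij,
    tsum_eulerPartialSum (by omega) ((Equiv.prodComm ℕ ℕ).summable_iff.1 hsum_ji), add_comm j i]
end
end

section
/- For integers m, n ≥ 0 and k ≥ 1, in H_t = Q[t]⟨x,y⟩: x^m ⧢_t x^n y^k = Σ_{m₁+m₂=m, m_i≥0} C(m₁+n−1, m₁) x^{m₁+n} (B − t·C), where B = Σ_{a₁+⋯+a_{k+1}=m₂, a_i≥0} x^{a₁} y x^{a₂} y ⋯ x^{a_k} y x^{a_{k+1}} and C = Σ_{i=0}^{m₂−1} Σ_{a₁+⋯+a_k=i, a_j≥0} x^{a₁}y⋯x^{a_{k−1}} y x^{a_k+m₂−i+1}; that is, x^m ⧢_t x^n y^k = Σ_{m₁+m₂=m} C(m₁+n−1, m₁) x^{m₁+n} (x^0 ⧢_t-expansion of y^k against x^{m₂}) as in the formula x^{m₂} ⧢_t y^k. -/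
open scoped BigOperators

noncomputable section

/-!
Since `ρ(x) = 0`, leading letters `x` on both sides shuffle as in the ordinary shuffle algebra, so
`G m n = x^m ⧢_t x^n w` obeys Pascal's rule `G (m+1) (n+1) = x G m (n+1) + x G (m+1) n`; solving it
expresses `G m n` through binomial coefficients and the column `G m₂ 0 = x^{m₂} ⧢_t w`.
For `w = y^k` that column follows from a second induction: without the correction terms the
recursion produces every word with `k` letters `y` and `m₂` letters `x`, which is `B`, and the only
correction, `-t x^{j+1}`, arises when the last `y` of `y^k` meets `x^j` with `j ≥ 1`; these
corrections accumulate to `C`.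
-/

open Finset

theorem Finset.Nat.sum_antidiagonalTuple_succ {M : Type*} [AddCommMonoid M] (k n : ℕ)
    (f : (Fin (k + 1) → ℕ) → M) :
    ∑ c ∈ Nat.antidiagonalTuple (k + 1) n, f c =
      ∑ p ∈ antidiagonal n, ∑ d ∈ Nat.antidiagonalTuple k p.2, f (Fin.cons p.1 d) := by
  rw [sum_sigma']
  refine (sum_nbij' (fun x : (_ : ℕ × ℕ) × (Fin k → ℕ) => (Fin.cons x.1.1 x.2 : Fin (k + 1) → ℕ))
    (fun c => ⟨(c 0, ∑ j, Fin.tail c j), Fin.tail c⟩) ?_ ?_ ?_ ?_ fun _ _ => rfl).symm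
  · rintro ⟨⟨a, b⟩, d⟩ h
    simp only [mem_sigma, HasAntidiagonal.mem_antidiagonal, Nat.mem_antidiagonalTuple] at h ⊢
    rw [Fin.sum_cons, h.2, h.1]
  · intro c hc
    simp only [Nat.mem_antidiagonalTuple, mem_sigma, HasAntidiagonal.mem_antidiagonal] at hc ⊢
    exact ⟨by rw [← hc, ← Fin.sum_cons (c 0) (Fin.tail c), Fin.cons_self_tail], trivial⟩
  · rintro ⟨⟨a, b⟩, d⟩ h
    simp only [mem_sigma, HasAntidiagonal.mem_antidiagonal, Nat.mem_antidiagonalTuple] at h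
    simp [Fin.tail_cons, h.2]
  · intro c _
    simp [Fin.cons_self_tail]

theorem eq_sum_choose_of_pascal {A : Type*} [Semiring A] (x : A) (G : ℕ → ℕ → A)
    (hrow : ∀ n, G 0 n = x ^ n * G 0 0)
    (hpascal : ∀ m n, G (m + 1) (n + 1) = x * G m (n + 1) + x * G (m + 1) n) (m n : ℕ) :
    G m n = ∑ p ∈ antidiagonal m, (p.1 + n - 1).choose p.1 • (x ^ (p.1 + n) * G p.2 0) := by
  induction m generalizing n with
  | zero => simp [hrow n]
  | succ m ihm =>
    induction n with
    | zero => simp [Nat.sum_antidiagonal_succ, Nat.choose_succ_self]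
    | succ n ihn =>
      have hterm : ∀ p ∈ antidiagonal m,
          (p.1 + 1 + (n + 1) - 1).choose (p.1 + 1) • (x ^ (p.1 + 1 + (n + 1)) * G p.2 0) =
            x * ((p.1 + (n + 1) - 1).choose p.1 • (x ^ (p.1 + (n + 1)) * G p.2 0)) +
              x * ((p.1 + 1 + n - 1).choose (p.1 + 1) • (x ^ (p.1 + 1 + n) * G p.2 0)) := by
        rintro ⟨a, b⟩ -
        simp only [mul_smul_comm, ← mul_assoc, ← pow_succ']
        rw [show a + 1 + (n + 1) - 1 = (a + n) + 1 by omega, Nat.choose_succ_succ',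
          show a + (n + 1) - 1 = a + n by omega, show a + 1 + n - 1 = a + n by omega,
          show a + 1 + (n + 1) = a + (n + 1) + 1 by omega,
          show a + 1 + n + 1 = a + (n + 1) + 1 by omega, add_smul]
      rw [hpascal, ihm, ihn, Nat.sum_antidiagonal_succ, Nat.sum_antidiagonal_succ,
        sum_congr rfl hterm, sum_add_distrib, mul_add, mul_sum, mul_sum]
      simp only [Nat.choose_zero_right, one_smul, zero_add, pow_succ', mul_assoc]
      abel

lemma wd_append_s19 (l₁ l₂ : List (Fin 2)) : wd (l₁ ++ l₂) = wd l₁ * wd l₂ := by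
  unfold wd; rw [← map_mul]; rfl

lemma wd_replicate (m : ℕ) (a : Fin 2) : wd (List.replicate m a) = wd [a] ^ m := by
  induction m with
  | zero => rw [List.replicate_zero, pow_zero]; rfl
  | succ m ih => rw [List.replicate_succ', wd_append_s19, ih, pow_succ]

lemma tshH_wd (l₁ l₂ : List (Fin 2)) : tshH (wd l₁) (wd l₂) = tshW l₁ l₂ := by
  simp only [tshH, wd, MonoidAlgebra.of_apply, MonoidAlgebra.coeff_single]
  rw [Finsupp.sum_single_index, Finsupp.sum_single_index]
  · simp
  · simp
  · simp [Finsupp.sum_fun_zero]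

lemma tshW_nil_right_s19 (l : List (Fin 2)) : tshW l [] = wd l := by
  cases l <;> rw [tshW]

lemma tshW_x_cons_x_cons (w₁ w₂ : List (Fin 2)) :
    tshW (0 :: w₁) (0 :: w₂) = wx * tshW w₁ (0 :: w₂) + wx * tshW (0 :: w₁) w₂ := by
  rw [tshW]; simp [ρt, wx]

lemma tshW_x_cons_y_cons (w₁ w₂ : List (Fin 2)) :
    tshW (0 :: w₁) (1 :: w₂) = wx * tshW w₁ (1 :: w₂) + wy * tshW (0 :: w₁) w₂ -
      δw w₂ • ((Polynomial.X : Rt) • (wx * wd (0 :: w₁))) := by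
  rw [tshW]; simp [ρt, wx, wy]

theorem tshW_replicate_x_replicate_x_append (w : List (Fin 2)) (m n : ℕ) :
    tshW (List.replicate m 0) (List.replicate n 0 ++ w) =
      ∑ p ∈ antidiagonal m,
        (p.1 + n - 1).choose p.1 • (wx ^ (p.1 + n) * tshW (List.replicate p.2 0) w) := by
  refine eq_sum_choose_of_pascal wx (fun m n => tshW (List.replicate m 0) (List.replicate n 0 ++ w))
    (fun n => ?_) (fun m n => ?_) m n
  · simp only [List.replicate_zero, List.nil_append, tshW, wd_append_s19, wd_replicate, wx]
  · exact tshW_x_cons_x_cons _ _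

def yPrefix (k : ℕ) (c : Fin (k + 1) → ℕ) : Ht :=
  (List.ofFn fun j : Fin k => wx ^ c j.castSucc * wy).prod

/-- `sumB k m` is `B_{k+1}^m`, the sum of all words with `k` letters `y` and `m` letters `x`;
`sumC k m` below is `C_k^{m-1}`. -/
def sumB (k m : ℕ) : Ht :=
  ∑ c ∈ Nat.antidiagonalTuple (k + 1) m, yPrefix k c * wx ^ c (Fin.last k)

def sumC : ℕ → ℕ → Ht
  | 0, _ => 0
  | k + 1, m => ∑ i ∈ range m, ∑ d ∈ Nat.antidiagonalTuple (k + 1) i,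
      yPrefix k d * wx ^ (d (Fin.last k) + m - i + 1)

lemma yPrefix_cons (k a : ℕ) (d : Fin (k + 1) → ℕ) :
    yPrefix (k + 1) (Fin.cons a d) = wx ^ a * wy * yPrefix k d := by
  have h : ∀ i : Fin k, (Fin.cons a d : Fin (k + 2) → ℕ) i.succ.castSucc = d i.castSucc :=
    fun i => by rw [← Fin.succ_castSucc, Fin.cons_succ]
  simp only [yPrefix, List.ofFn_succ, List.prod_cons, Fin.castSucc_zero, Fin.cons_zero, h]

lemma sumB_zero_left (m : ℕ) : sumB 0 m = wx ^ m := by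
  simp [sumB, yPrefix, Nat.antidiagonalTuple_one]

lemma sumB_zero_right (k : ℕ) : sumB k 0 = wy ^ k := by
  simp [sumB, yPrefix, Nat.antidiagonalTuple_zero_right, List.ofFn_const]

lemma sumB_succ_left (k n : ℕ) :
    sumB (k + 1) n = ∑ p ∈ antidiagonal n, wx ^ p.1 * wy * sumB k p.2 := by
  rw [sumB, Nat.sum_antidiagonalTuple_succ]
  refine sum_congr rfl fun p _ => ?_
  rw [sumB, mul_sum]
  refine sum_congr rfl fun d _ => ?_
  rw [yPrefix_cons, ← Fin.succ_last, Fin.cons_succ, mul_assoc]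

lemma sumB_succ_succ (k m : ℕ) :
    sumB (k + 1) (m + 1) = wx * sumB (k + 1) m + wy * sumB k (m + 1) := by
  rw [sumB_succ_left, sumB_succ_left, Nat.sum_antidiagonal_succ, mul_sum, add_comm]
  simp only [pow_zero, one_mul, pow_succ', mul_assoc]

lemma sumC_zero_right (k : ℕ) : sumC k 0 = 0 := by
  cases k <;> simp [sumC]

lemma sumC_succ (k m : ℕ) : sumC (k + 1) m = ∑ i ∈ range m, sumB k i * wx ^ (m - i + 1) := by
  refine sum_congr rfl fun i hi => ?_
  rw [sumB, sum_mul]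
  refine sum_congr rfl fun d _ => ?_
  rw [mul_assoc, ← pow_add, show d (Fin.last k) + m - i + 1 = d (Fin.last k) + (m - i + 1) by
    have := mem_range.mp hi; omega]

lemma sumC_one (m : ℕ) : sumC 1 m = m • wx ^ (m + 1) := by
  rw [sumC_succ, sum_congr rfl (g := fun _ => wx ^ (m + 1)), sum_const, card_range]
  intro i hi
  rw [sumB_zero_left, ← pow_add, show i + (m - i + 1) = m + 1 by have := mem_range.mp hi; omega]

lemma sumC_succ_succ (k m : ℕ) :
    sumC (k + 1) (m + 1) =
      wx * sumC (k + 1) m + wy * sumC k (m + 1) + if k = 0 then wx ^ (m + 2) else 0 := by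
  cases k with
  | zero => rw [sumC_one, sumC_one, sumC, if_pos rfl, mul_smul_comm, ← pow_succ', succ_nsmul]; simp
  | succ k =>
    simp only [sumC_succ, sum_range_succ' _ m, Nat.add_sub_add_right,
      sumB_succ_succ, sumB_zero_right, pow_succ' wy, add_mul, sum_add_distrib, mul_add, mul_sum,
      mul_assoc, if_neg k.succ_ne_zero, add_zero]
    abel

lemma δw_replicate (k : ℕ) (a : Fin 2) : δw (List.replicate k a) = if k = 0 then 1 else 0 := by
  simp [δw]

theorem tshW_replicate_x_replicate_y (m k : ℕ) :
    tshW (List.replicate m 0) (List.replicate k 1) = sumB k m - (Polynomial.X : Rt) • sumC k m := by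
  induction m generalizing k with
  | zero => simp [tshW, wd_replicate, sumB_zero_right, sumC_zero_right, wy]
  | succ m ihm =>
    induction k with
    | zero => simp [tshW_nil_right_s19, wd_replicate, sumB_zero_left, sumC, wx]
    | succ k ihk =>
      rw [List.replicate_succ, List.replicate_succ, tshW_x_cons_y_cons, ← List.replicate_succ,
        ← List.replicate_succ, ihm, ihk, wd_replicate, ← wx, sumB_succ_succ, sumC_succ_succ,
        δw_replicate]
      split_ifs <;> simp only [one_smul, zero_smul, smul_add, mul_sub, mul_smul_comm,
        ← pow_succ', add_zero, sub_zero] <;> abel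

/-- For m, n ≥ 0 and k ≥ 1,
`x^m ⧢_t x^n y^k = Σ_{m₁+m₂=m} C(m₁+n−1,m₁) x^{m₁+n} (B_{k+1}^{m₂} − t C_k^{m₂−1})`,
where `B_{k+1}^{m₂} = Σ_{a₁+⋯+a_{k+1}=m₂} x^{a₁}y⋯x^{a_k}yx^{a_{k+1}}` and
`C_k^{m₂−1} = Σ_{i=0}^{m₂−1} Σ_{a₁+⋯+a_k=i} x^{a₁}y⋯x^{a_{k−1}}yx^{a_k+m₂−i+1}`. -/
theorem tshuffle_xm_xnyk (m n k : ℕ) (hk : 1 ≤ k) :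
    tshH (wx ^ m) (wx ^ n * wy ^ k) =
      ∑ p ∈ Finset.HasAntidiagonal.antidiagonal m,
        (((p.1 + n - 1).choose p.1 : ℕ) : Rt) •
          (wx ^ (p.1 + n) *
            ((∑ c ∈ Finset.Nat.antidiagonalTuple (k + 1) p.2,
                (List.ofFn fun j : Fin k => wx ^ c j.castSucc * wy).prod * wx ^ c (Fin.last k)) -
              (Polynomial.X : Rt) •
                ∑ i ∈ Finset.range p.2, ∑ d ∈ Finset.Nat.antidiagonalTuple k i,
                  (List.ofFn fun j : Fin (k - 1) => wx ^ d (Fin.castLE (by omega) j) * wy).prod *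
                    wx ^ (d ⟨k - 1, by omega⟩ + p.2 - i + 1))) := by
  obtain ⟨k, rfl⟩ : ∃ k', k = k' + 1 := ⟨k - 1, by omega⟩
  have hxm : wx ^ m = wd (List.replicate m 0) := (wd_replicate m 0).symm
  have hxnyk : wx ^ n * wy ^ (k + 1) = wd (List.replicate n 0 ++ List.replicate (k + 1) 1) := by
    rw [wd_append_s19, wd_replicate, wd_replicate]; rfl
  rw [hxm, hxnyk, tshH_wd, tshW_replicate_x_replicate_x_append]
  refine sum_congr rfl fun p _ => ?_
  rw [tshW_replicate_x_replicate_y, Nat.cast_smul_eq_nsmul]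
  rfl
end
end
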